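/- arXiv:1806.08931 — 8 statements merged into one kernel-verified Lean document; each statement's English description precedes it below -/
import Mathlib

section
/- The function g(z) = −log(β(1 − e^{−z})), where β(u) = (u + √(u(4−3u)))/2, is strictly decreasing on (0, ∞). -/
noncomputable def betaFn (u : ℝ) : ℝ := (u + Real.sqrt (u * (4 - 3 * u))) / 2

noncomputable def gFn (z : ℝ) : ℝ := - Real.log (betaFn (1 - Real.exp (-z)))

lemma key_sqrt {u : ℝ} (hu0 : 0 < u) (hu1 : u < 1) :
    3 * u - 2 < Real.sqrt (u * (4 - 3 * u)) := by
  rcases lt_or_ge (3 * u - 2) 0 with h | h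
  · exact h.trans_le (Real.sqrt_nonneg _)
  · rw [show (3*u-2 : ℝ) = Real.sqrt ((3*u-2)^2) from (Real.sqrt_sq h).symm]
    apply Real.sqrt_lt_sqrt (sq_nonneg _)
    nlinarith

lemma beta_pos {u : ℝ} (hu0 : 0 < u) : 0 < betaFn u := by
  unfold betaFn
  have := Real.sqrt_nonneg (u * (4 - 3 * u))
  linarith

lemma beta_mono {a b : ℝ} (ha : 0 < a) (hab : a < b) (hb : b < 1) :
    betaFn a < betaFn b := by
  have ha1 : a < 1 := hab.trans hb
  have hb0 : 0 < b := ha.trans hab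
  set sa := Real.sqrt (a * (4 - 3 * a)) with hsa
  set sb := Real.sqrt (b * (4 - 3 * b)) with hsb
  have hfa : 0 ≤ a * (4 - 3 * a) := by nlinarith
  have hfb : 0 ≤ b * (4 - 3 * b) := by nlinarith
  have hsa2 : sa ^ 2 = a * (4 - 3 * a) := Real.sq_sqrt hfa
  have hsb2 : sb ^ 2 = b * (4 - 3 * b) := Real.sq_sqrt hfb
  have hka : 3 * a - 2 < sa := key_sqrt ha ha1
  have hkb : 3 * b - 2 < sb := key_sqrt hb0 hb
  have hsan : 0 ≤ sa := Real.sqrt_nonneg _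
  have hsbn : 0 ≤ sb := Real.sqrt_nonneg _
  unfold betaFn
  rw [← hsa, ← hsb]
  have : a + sa < b + sb := by nlinarith [mul_pos (sub_pos.mpr hab) (show (0:ℝ) < sa + sb - (3*(a+b) - 4) by linarith)]
  linarith

theorem g_strictAnti : StrictAntiOn gFn (Set.Ioi (0:ℝ)) := by
  intro x hx y hy hxy
  simp only [Set.mem_Ioi] at hx hy
  have ha0 : 0 < 1 - Real.exp (-x) := by
    have : Real.exp (-x) < 1 := Real.exp_lt_one_iff.mpr (by linarith)
    linarith
  have hab : 1 - Real.exp (-x) < 1 - Real.exp (-y) := by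
    have : Real.exp (-y) < Real.exp (-x) := Real.exp_lt_exp.mpr (by linarith)
    linarith
  have hb1 : 1 - Real.exp (-y) < 1 := by
    have := Real.exp_pos (-y); linarith
  unfold gFn
  have h1 := beta_pos ha0
  have h2 := beta_mono ha0 hab hb1
  have := Real.log_lt_log h1 h2
  linarith
end

section
/- There exists z₀ > 0 such that for all 0 < z ≤ z₀ one has −(1/2)·log z − √z ≤ g(z) ≤ −(1/2)·log z + z, where g(z) = −log(β(1 − e^{−z})) and β(u) = (u + √(u(4−3u)))/2. -/
theorem g_near_zero_bounds :
    ∃ z₀ > (0:ℝ), ∀ z : ℝ, 0 < z → z ≤ z₀ →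
      -(1/2) * Real.log z - Real.sqrt z ≤ gFn z ∧
      gFn z ≤ -(1/2) * Real.log z + z := by
  refine ⟨1, one_pos, fun z hz hz1 => ?_⟩
  set u : ℝ := 1 - Real.exp (-z) with hudef
  have hexppos : 0 < Real.exp (-z) := Real.exp_pos _
  have hexplt1 : Real.exp (-z) < 1 := by
    rw [Real.exp_lt_one_iff]; linarith
  have hu0 : 0 < u := by simp only [hudef]; linarith
  have hu1 : u ≤ 1 := by simp only [hudef]; linarith
  have hmul : Real.exp z * Real.exp (-z) = 1 := by
    rw [← Real.exp_add]; simp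
  have hez : z + 1 ≤ Real.exp z := Real.add_one_le_exp z
  have huz : u ≤ z := by
    have := Real.add_one_le_exp (-z); simp only [hudef]; linarith
  have hulow : z * Real.exp (-z) ≤ u := by
    simp only [hudef]; nlinarith [hexppos]
  -- basic sqrt facts
  have hsu : Real.sqrt u * Real.sqrt u = u := Real.mul_self_sqrt hu0.le
  have hsu0 : 0 < Real.sqrt u := Real.sqrt_pos.2 hu0
  have hsu1 : Real.sqrt u ≤ 1 := Real.sqrt_le_one.2 hu1
  have husu : u ≤ Real.sqrt u := by nlinarith
  -- β lower bound: √u ≤ β(u)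
  have hA : 2 * Real.sqrt u - u ≤ Real.sqrt (u * (4 - 3 * u)) := by
    have h1 : 0 ≤ 2 * Real.sqrt u - u := by nlinarith
    have h2 : (2 * Real.sqrt u - u) ^ 2 ≤ u * (4 - 3 * u) := by nlinarith
    nlinarith [Real.sq_sqrt (by nlinarith : (0:ℝ) ≤ u * (4 - 3 * u)),
      Real.sqrt_nonneg (u * (4 - 3 * u)), h2]
  have hbetaLB : Real.sqrt u ≤ betaFn u := by
    unfold betaFn; linarith
  -- β upper bound: β(u) ≤ √u + u/2
  have hB : Real.sqrt (u * (4 - 3 * u)) ≤ 2 * Real.sqrt u := by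
    have h1 : u * (4 - 3 * u) ≤ 4 * u := by nlinarith
    calc Real.sqrt (u * (4 - 3 * u)) ≤ Real.sqrt (4 * u) := Real.sqrt_le_sqrt h1
      _ = 2 * Real.sqrt u := by
          rw [show (4:ℝ) * u = 2^2 * u by ring, Real.sqrt_mul (by positivity),
            Real.sqrt_sq (by norm_num)]
  have hbetaUB : betaFn u ≤ Real.sqrt u + u / 2 := by
    unfold betaFn; linarith
  have hβpos : 0 < betaFn u := lt_of_lt_of_le hsu0 hbetaLB
  -- sqrt facts in z
  have hsz : Real.sqrt z * Real.sqrt z = z := Real.mul_self_sqrt hz.le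
  have hsz0 : 0 < Real.sqrt z := Real.sqrt_pos.2 hz
  have hsz1 : Real.sqrt z ≤ 1 := Real.sqrt_le_one.2 hz1
  -- lower bound β ≥ √z e^{-z}
  have hLB : Real.sqrt z * Real.exp (-z) ≤ betaFn u := by
    have h1 : Real.sqrt (z * Real.exp (-z)) ≤ Real.sqrt u := Real.sqrt_le_sqrt hulow
    have h2 : Real.sqrt (z * Real.exp (-z)) = Real.sqrt z * Real.sqrt (Real.exp (-z)) :=
      Real.sqrt_mul hz.le _
    have h3 : Real.exp (-z) ≤ Real.sqrt (Real.exp (-z)) := by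
      have hm := Real.mul_self_sqrt hexppos.le
      have hle1 : Real.sqrt (Real.exp (-z)) ≤ 1 := Real.sqrt_le_one.2 hexplt1.le
      nlinarith [Real.sqrt_nonneg (Real.exp (-z))]
    have h4 : Real.sqrt z * Real.exp (-z) ≤ Real.sqrt z * Real.sqrt (Real.exp (-z)) := by
      nlinarith
    linarith [hbetaLB]
  -- upper bound β ≤ √z e^{√z}
  have hUB : betaFn u ≤ Real.sqrt z * Real.exp (Real.sqrt z) := by
    have h1 : Real.sqrt u ≤ Real.sqrt z := Real.sqrt_le_sqrt huz
    have h2 : betaFn u ≤ Real.sqrt z + z / 2 := by linarith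
    have h3 : Real.sqrt z + 1 ≤ Real.exp (Real.sqrt z) := Real.add_one_le_exp _
    have h4 : 1 + Real.sqrt z / 2 ≤ Real.exp (Real.sqrt z) := by linarith
    have h5 : Real.sqrt z * (1 + Real.sqrt z / 2) ≤ Real.sqrt z * Real.exp (Real.sqrt z) :=
      mul_le_mul_of_nonneg_left h4 hsz0.le
    have h6 : Real.sqrt z * (1 + Real.sqrt z / 2) = Real.sqrt z + z / 2 := by
      linear_combination hsz / 2
    linarith [h2, h5, h6.ge]
  constructor
  · -- lower bound on g
    have hlog : Real.log (betaFn u) ≤ Real.log (Real.sqrt z * Real.exp (Real.sqrt z)) :=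
      Real.log_le_log hβpos hUB
    have heq : Real.log (Real.sqrt z * Real.exp (Real.sqrt z))
        = 1/2 * Real.log z + Real.sqrt z := by
      rw [Real.log_mul (by positivity) (Real.exp_ne_zero _), Real.log_sqrt hz.le,
        Real.log_exp]; ring
    simp only [gFn, hudef] at *
    linarith [hlog, heq.le]
  · -- upper bound on g
    have hlog : Real.log (Real.sqrt z * Real.exp (-z)) ≤ Real.log (betaFn u) :=
      Real.log_le_log (by positivity) hLB
    have heq : Real.log (Real.sqrt z * Real.exp (-z)) = 1/2 * Real.log z - z := by
      rw [Real.log_mul (by positivity) (Real.exp_ne_zero _), Real.log_sqrt hz.le,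
        Real.log_exp]; ring
    simp only [gFn, hudef] at *
    linarith
end

section
/- For every ε > 0 there exists Z > 0 such that for all z ≥ Z one has (1−ε)·e^{−2z} ≤ g(z) ≤ (1+ε)·e^{−2z}; that is, g(z) ∼ e^{−2z} as z → ∞, where g(z) = −log(β(1 − e^{−z})) and β(u) = (u + √(u(4−3u)))/2. -/
/-! With `t = exp (-z)` one has `β (1 - t) = 1 - t² + O(t³)`, since `(1 - t)(1 + 3t)` lies between
`(1 + t - 2t²)²` and `(1 + t - 2t² + 4t³)²`. The bounds `1 - x ≤ -log x ≤ x⁻¹ - 1` then squeeze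
`g z = -log β (1 - t)` between `t² - 2t³` and `t² / (1 - t²)`, both of which are `t² (1 + O(t))`. -/

open Real Filter

lemma one_sub_sq_le_betaFn_one_sub {t : ℝ} (h0 : 0 ≤ t) (h1 : t ≤ 1) :
    1 - t ^ 2 ≤ betaFn (1 - t) := by
  have hsqrt : 1 + t - 2 * t ^ 2 ≤ √((1 - t) * (4 - 3 * (1 - t))) :=
    (le_abs_self _).trans <| Real.abs_le_sqrt <| by nlinarith [pow_nonneg h0 3]
  unfold betaFn
  linarith

lemma betaFn_one_sub_le {t : ℝ} (h0 : 0 ≤ t) :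
    betaFn (1 - t) ≤ 1 - t ^ 2 + 2 * t ^ 3 := by
  have hpos : 0 ≤ 1 + t - 2 * t ^ 2 + 4 * t ^ 3 := by nlinarith [sq_nonneg (2 * t - 1 / 2)]
  have hsqrt : √((1 - t) * (4 - 3 * (1 - t))) ≤ 1 + t - 2 * t ^ 2 + 4 * t ^ 3 :=
    (Real.sqrt_le_left hpos).2 <| by
      nlinarith [pow_nonneg h0 3, mul_nonneg (pow_nonneg h0 3) (sq_nonneg (2 * t - 3 / 4))]
  unfold betaFn
  linarith

lemma sq_sub_two_mul_cube_le_neg_log_betaFn_one_sub {t : ℝ} (h0 : 0 ≤ t) (h1 : t < 1) :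
    t ^ 2 - 2 * t ^ 3 ≤ -log (betaFn (1 - t)) := by
  have hβ : 0 < betaFn (1 - t) := by nlinarith [one_sub_sq_le_betaFn_one_sub h0 h1.le]
  linarith [log_le_sub_one_of_pos hβ, betaFn_one_sub_le h0]

lemma neg_log_betaFn_one_sub_le {t : ℝ} (h0 : 0 ≤ t) (h1 : t < 1) :
    -log (betaFn (1 - t)) ≤ t ^ 2 / (1 - t ^ 2) := by
  have hden : 0 < 1 - t ^ 2 := by nlinarith
  have hβ := one_sub_sq_le_betaFn_one_sub h0 h1.le
  calc -log (betaFn (1 - t)) ≤ (betaFn (1 - t))⁻¹ - 1 := by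
        linarith [one_sub_inv_le_log_of_pos (hden.trans_le hβ)]
    _ ≤ (1 - t ^ 2)⁻¹ - 1 := by gcongr
    _ = t ^ 2 / (1 - t ^ 2) := by field_simp; ring

lemma neg_log_betaFn_one_sub_bounds {ε t : ℝ} (h0 : 0 ≤ t) (h_half : t ≤ 1 / 2)
    (h_eps : t ≤ ε / 2) :
    (1 - ε) * t ^ 2 ≤ -log (betaFn (1 - t)) ∧ -log (betaFn (1 - t)) ≤ (1 + ε) * t ^ 2 := by
  have hε : 0 ≤ ε := by linarith
  constructor
  · calc (1 - ε) * t ^ 2 ≤ t ^ 2 - 2 * t ^ 3 := by nlinarith [sq_nonneg t]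
      _ ≤ _ := sq_sub_two_mul_cube_le_neg_log_betaFn_one_sub h0 (by linarith)
  · have ht_sq_eps : t ^ 2 ≤ ε / 4 := by nlinarith [mul_le_mul h_half h_eps h0 (by norm_num)]
    have ht_sq_quarter : t ^ 2 ≤ 1 / 4 := by nlinarith
    have hslack : 0 ≤ ε - (1 + ε) * t ^ 2 := by
      nlinarith [mul_le_mul_of_nonneg_left ht_sq_quarter hε]
    calc _ ≤ t ^ 2 / (1 - t ^ 2) := neg_log_betaFn_one_sub_le h0 (by linarith)
      _ ≤ (1 + ε) * t ^ 2 := by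
        rw [div_le_iff₀ (by linarith)]
        nlinarith [mul_nonneg (sq_nonneg t) hslack]

theorem g_asymptotic :
    ∀ ε > (0:ℝ), ∃ Z > (0:ℝ), ∀ z : ℝ, Z ≤ z →
      (1 - ε) * Real.exp (-2 * z) ≤ gFn z ∧ gFn z ≤ (1 + ε) * Real.exp (-2 * z) := by
  intro ε hε
  obtain ⟨Z, hZ⟩ := eventually_atTop.1 <| tendsto_exp_neg_atTop_nhds_zero.eventually
    (ge_mem_nhds (by positivity : 0 < min (1 / 2) (ε / 2)))
  refine ⟨max Z 1, lt_max_of_lt_right one_pos, fun z hz => ?_⟩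
  obtain ⟨h_half, h_eps⟩ := le_min_iff.1 (hZ z (le_of_max_le_left hz))
  have hexp : exp (-2 * z) = exp (-z) ^ 2 := by rw [← exp_nat_mul]; ring_nf
  rw [gFn, hexp]
  exact neg_log_betaFn_one_sub_bounds (exp_pos _).le h_half h_eps
end

section
/- There exists a constant B > 0 such that the derivative of g satisfies −g′(z) ≤ B/z for all 0 < z ≤ B, and −g′(z) ≤ 3·e^{−2z} for all z ≥ B/2, where g(z) = −log(β(1 − e^{−z})) and β(u) = (u + √(u(4−3u)))/2. -/
open Real

lemma betaFn_pos {u : ℝ} (hu : 0 < u) : 0 < betaFn u := by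
  unfold betaFn; positivity

lemma hasDerivAt_betaFn {u : ℝ} (hu : 0 < u * (4 - 3 * u)) :
    HasDerivAt betaFn ((√(u * (4 - 3 * u)) + 2 - 3 * u) / (2 * √(u * (4 - 3 * u)))) u := by
  have hq : HasDerivAt (fun x : ℝ => x * (4 - 3 * x)) (4 - 6 * u) u :=
    ((hasDerivAt_id u).mul (((hasDerivAt_id u).const_mul 3).const_sub 4)).congr_deriv
      (by simp only [id]; ring)
  have hs : 0 < √(u * (4 - 3 * u)) := sqrt_pos.2 hu
  refine (((hasDerivAt_id u).add ((hasDerivAt_sqrt hu.ne').comp u hq)).div_const 2).congr_deriv ?_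
  generalize √(u * (4 - 3 * u)) = s at hs ⊢
  field_simp
  ring

noncomputable def negDerivG (t : ℝ) : ℝ :=
  let s := √((1 - t) * (1 + 3 * t))
  t * (s + 3 * t - 1) / (s * (1 - t + s))

lemma hasDerivAt_gFn {z : ℝ} (hz : 0 < z) : HasDerivAt gFn (-negDerivG (exp (-z))) z := by
  have ht0 : 0 < exp (-z) := exp_pos _
  have ht1 : exp (-z) < 1 := exp_lt_one_iff.2 (neg_lt_zero.2 hz)
  have hu : 0 < (1 - exp (-z)) * (4 - 3 * (1 - exp (-z))) := by nlinarith
  have hinner : HasDerivAt (fun x => 1 - exp (-x)) (exp (-z)) z :=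
    (((hasDerivAt_neg z).exp).const_sub 1).congr_deriv (by ring)
  have hβ := (hasDerivAt_betaFn hu).comp z hinner
  refine ((hβ.log (betaFn_pos (by linarith)).ne').neg).congr_deriv ?_
  have h43 : 4 - 3 * (1 - exp (-z)) = 1 + 3 * exp (-z) := by ring
  have hs : 0 < √((1 - exp (-z)) * (1 + 3 * exp (-z))) := by rw [← h43]; exact sqrt_pos.2 hu
  simp only [negDerivG, betaFn, h43, Function.comp]
  field_simp
  ring

lemma negDerivG_le_four_div {t : ℝ} (ht0 : 0 < t) (ht1 : t < 1) :
    negDerivG t ≤ 4 / (1 - t) := by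
  have hs : 0 < √((1 - t) * (1 + 3 * t)) := sqrt_pos.2 (by nlinarith)
  have hs2 := sq_sqrt (by nlinarith : 0 ≤ (1 - t) * (1 + 3 * t))
  simp only [negDerivG]
  generalize √((1 - t) * (1 + 3 * t)) = s at hs hs2 ⊢
  have hs_le : s ≤ 2 := by nlinarith
  rw [div_le_div_iff₀ (by positivity) (by linarith)]
  nlinarith [mul_le_mul_of_nonneg_right (by nlinarith : t * (s + 3 * t - 1) ≤ 4)
    (by linarith : (0:ℝ) ≤ 1 - t)]

lemma negDerivG_le_three_mul_sq {t : ℝ} (ht0 : 0 < t) (ht : t ≤ 1 / 2) :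
    negDerivG t ≤ 3 * t ^ 2 := by
  have hs : 0 < √((1 - t) * (1 + 3 * t)) := sqrt_pos.2 (by nlinarith)
  have hs2 := sq_sqrt (by nlinarith : 0 ≤ (1 - t) * (1 + 3 * t))
  simp only [negDerivG]
  generalize √((1 - t) * (1 + 3 * t)) = s at hs hs2 ⊢
  have hq : 0 < 1 - 3 * t + 3 * t ^ 2 := by nlinarith [sq_nonneg (2 * t - 1)]
  have hr : 0 < 1 + 6 * t ^ 2 - 9 * t ^ 3 := by nlinarith
  have hsq : (s * (1 - 3 * t + 3 * t ^ 2)) ^ 2 ≤ (1 + 6 * t ^ 2 - 9 * t ^ 3) ^ 2 := by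
    -- `hD` is the difference of the two squares once `s ^ 2` is substituted
    have hD : 0 ≤ 4 * t + 12 * t^2 - 48 * t^3 + 108 * t^4 - 180 * t^5 + 108 * t^6 := by
      nlinarith [mul_nonneg ht0.le (sq_nonneg (2*t-1)), sq_nonneg (t^2*(2*t-1)), pow_pos ht0 3]
    nlinarith [hs2]
  have key : s * (1 - 3 * t + 3 * t ^ 2) ≤ 1 + 6 * t ^ 2 - 9 * t ^ 3 :=
    (pow_le_pow_iff_left₀ (by positivity) hr.le two_ne_zero).1 hsq
  rw [div_le_iff₀ (by nlinarith)]
  nlinarith [mul_le_mul_of_nonneg_left key ht0.le, hs2]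

lemma exp_neg_le_one_sub_half {z : ℝ} (hz0 : 0 ≤ z) (hz1 : z ≤ 1) : exp (-z) ≤ 1 - z / 2 := by
  rw [exp_neg, inv_le_iff_one_le_mul₀ (exp_pos z)]
  nlinarith [add_one_le_exp z]

lemma exp_neg_le_half {z : ℝ} (hz : 1 ≤ z) : exp (-z) ≤ 1 / 2 :=
  (exp_le_exp.2 (neg_le_neg hz)).trans exp_neg_one_lt_half.le

lemma neg_deriv_gFn {z : ℝ} (hz : 0 < z) : -deriv gFn z = negDerivG (exp (-z)) := by
  rw [(hasDerivAt_gFn hz).deriv, neg_neg]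

theorem g_deriv_bounds :
    ∃ B > (0:ℝ),
      (∀ z : ℝ, 0 < z → z ≤ B → -(deriv gFn z) ≤ B / z) ∧
      (∀ z : ℝ, B / 2 ≤ z → -(deriv gFn z) ≤ 3 * Real.exp (-2 * z)) := by
  refine ⟨8, by norm_num, fun z hz hz8 => ?_, fun z hz => ?_⟩
  · rw [neg_deriv_gFn hz]
    rcases le_or_gt z 1 with hz1 | hz1
    · calc negDerivG (exp (-z)) ≤ 4 / (1 - exp (-z)) :=
            negDerivG_le_four_div (exp_pos _) (exp_lt_one_iff.2 (neg_lt_zero.2 hz))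
        _ ≤ 4 / (z / 2) := by gcongr; linarith [exp_neg_le_one_sub_half hz.le hz1]
        _ = 8 / z := by ring
    · calc negDerivG (exp (-z)) ≤ 3 * exp (-z) ^ 2 :=
            negDerivG_le_three_mul_sq (exp_pos _) (exp_neg_le_half hz1.le)
        _ ≤ 3 * (1 / 2) ^ 2 := by gcongr; exact exp_neg_le_half hz1.le
        _ ≤ 8 / z := by rw [le_div_iff₀ hz]; linarith
  · rw [neg_deriv_gFn (by linarith)]
    calc negDerivG (exp (-z)) ≤ 3 * exp (-z) ^ 2 :=
          negDerivG_le_three_mul_sq (exp_pos _) (exp_neg_le_half (by linarith))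
      _ = 3 * exp (-2 * z) := by rw [← exp_nat_mul]; ring_nf
end

section
/- In the two-neighbour bootstrap percolation process on ℤ², if a finite rectangle R = [a,b] × [c,d] is internally filled by a set A (i.e. the closure of A ∩ R under the bootstrap dynamics restricted to R equals R), then |A ∩ R| ≥ φ(R)/2, where φ(R) = (b−a+1) + (d−c+1) is the semi-perimeter of R. -/
/-- Two sites of `ℤ²` are adjacent if they are at `ℓ¹`-distance one. -/
def adjZ2 (v w : ℤ × ℤ) : Prop := (v.1 - w.1).natAbs + (v.2 - w.2).natAbs = 1

/-- The closure of initial set `A` under the two-neighbour bootstrap process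
restricted to the region `R`: the smallest set containing `A ∩ R` and closed
under adding sites of `R` having at least two already-infected neighbours. -/
def bClosure (R A : Set (ℤ × ℤ)) : Set (ℤ × ℤ) :=
  ⋂₀ {B : Set (ℤ × ℤ) | A ∩ R ⊆ B ∧
      ∀ v ∈ R, (∃ w₁ ∈ B, ∃ w₂ ∈ B, w₁ ≠ w₂ ∧ adjZ2 v w₁ ∧ adjZ2 v w₂) → v ∈ B}

namespace BP
def nbrs (v : ℤ × ℤ) : Finset (ℤ × ℤ) :=
  {(v.1+1, v.2), (v.1-1, v.2), (v.1, v.2+1), (v.1, v.2-1)}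

lemma sum_nbrs (v : ℤ × ℤ) (f : ℤ × ℤ → ℕ) :
    ∑ w ∈ nbrs v, f w = f (v.1+1,v.2) + f (v.1-1,v.2) + f (v.1,v.2+1) + f (v.1,v.2-1) := by
  rw [nbrs]
  rw [Finset.sum_insert (by simp [Prod.ext_iff] <;> omega),
      Finset.sum_insert (by simp [Prod.ext_iff] <;> omega),
      Finset.sum_insert (by simp [Prod.ext_iff] <;> omega), Finset.sum_singleton]
  ring

lemma mem_nbrs {v w : ℤ × ℤ} : w ∈ nbrs v ↔ adjZ2 v w := by
  simp [nbrs, adjZ2, Prod.ext_iff]; omega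

lemma mem_nbrs_comm {v w : ℤ × ℤ} : w ∈ nbrs v ↔ v ∈ nbrs w := by
  simp [mem_nbrs, adjZ2]; omega

lemma card_nbrs (v : ℤ × ℤ) : (nbrs v).card = 4 := by
  rw [Finset.card_eq_sum_ones, sum_nbrs]

def per (S : Finset (ℤ × ℤ)) : ℕ := ∑ v ∈ S, (nbrs v \ S).card

lemma card_sdiff_sum (t S : Finset (ℤ × ℤ)) :
    (t \ S).card = ∑ w ∈ t, if w ∈ S then 0 else 1 := by
  rw [Finset.sdiff_eq_filter, Finset.card_filter]
  exact Finset.sum_congr rfl fun w _ => by by_cases h : w ∈ S <;> simp [h]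

lemma card_inter_sum (t S : Finset (ℤ × ℤ)) :
    (t ∩ S).card = ∑ w ∈ t, if w ∈ S then 1 else 0 := by
  rw [← Finset.filter_mem_eq_inter, Finset.card_filter]

lemma double_count (S T : Finset (ℤ × ℤ)) :
    ∑ v ∈ S, (nbrs v ∩ T).card = ∑ w ∈ T, (nbrs w ∩ S).card := by
  have h1 : ∀ (U V : Finset (ℤ × ℤ)), ∀ v, (nbrs v ∩ U).card = ∑ w ∈ U, if w ∈ nbrs v then 1 else 0 := by
    intro U V v
    rw [Finset.inter_comm, ← Finset.filter_mem_eq_inter, Finset.card_filter]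
  calc ∑ v ∈ S, (nbrs v ∩ T).card
      = ∑ v ∈ S, ∑ w ∈ T, if w ∈ nbrs v then 1 else 0 :=
        Finset.sum_congr rfl fun v _ => h1 T S v
    _ = ∑ w ∈ T, ∑ v ∈ S, if w ∈ nbrs v then 1 else 0 := Finset.sum_comm
    _ = ∑ w ∈ T, ∑ v ∈ S, if v ∈ nbrs w then 1 else 0 := by
        refine Finset.sum_congr rfl fun w _ => Finset.sum_congr rfl fun v _ => ?_
        simp only [mem_nbrs_comm]
    _ = ∑ w ∈ T, (nbrs w ∩ S).card :=
        Finset.sum_congr rfl fun w _ => (h1 S T w).symm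

lemma per_union (S T : Finset (ℤ × ℤ)) (hdisj : Disjoint S T)
    (h : ∀ t ∈ T, 2 ≤ (nbrs t ∩ S).card) : per (S ∪ T) ≤ per S := by
  have hd : ∀ w, w ∈ T → w ∉ S := fun w hw hs => (Finset.disjoint_left.mp hdisj) hs hw
  have key1 : ∀ v : ℤ × ℤ, (nbrs v \ S).card
      = (nbrs v \ (S ∪ T)).card + (nbrs v ∩ T).card := by
    intro v
    rw [card_sdiff_sum, card_sdiff_sum, card_inter_sum, ← Finset.sum_add_distrib]
    refine Finset.sum_congr rfl fun w _ => ?_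
    by_cases h1 : w ∈ T
    · simp [h1, hd w h1]
    · by_cases h2 : w ∈ S <;> simp [h1, h2]
  have key3 : ∀ t ∈ T, (nbrs t \ (S ∪ T)).card ≤ (nbrs t ∩ S).card := by
    intro t ht
    have h4 : (nbrs t \ S).card + (nbrs t ∩ S).card = 4 := by
      rw [Finset.card_sdiff_add_card_inter, card_nbrs]
    have h5 : (nbrs t \ (S ∪ T)).card ≤ (nbrs t \ S).card :=
      Finset.card_le_card (Finset.sdiff_subset_sdiff (le_refl _) Finset.subset_union_left)
    have := h t ht
    omega
  calc per (S ∪ T) = ∑ v ∈ S, (nbrs v \ (S ∪ T)).card + ∑ t ∈ T, (nbrs t \ (S ∪ T)).card := by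
        rw [per, Finset.sum_union hdisj]
    _ ≤ ∑ v ∈ S, (nbrs v \ (S ∪ T)).card + ∑ t ∈ T, (nbrs t ∩ S).card := by
        exact Nat.add_le_add_left (Finset.sum_le_sum key3) _
    _ = ∑ v ∈ S, (nbrs v \ (S ∪ T)).card + ∑ v ∈ S, (nbrs v ∩ T).card := by
        rw [double_count T S]
    _ = per S := by rw [per, ← Finset.sum_add_distrib]; exact (Finset.sum_congr rfl fun v _ => (key1 v).symm)


def step (Dom S : Finset (ℤ × ℤ)) : Finset (ℤ × ℤ) :=
  S ∪ Dom.filter (fun v => 2 ≤ (nbrs v ∩ S).card)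

lemma subset_step (Dom S : Finset (ℤ × ℤ)) : S ⊆ step Dom S := Finset.subset_union_left

lemma step_subset {Dom S : Finset (ℤ × ℤ)} (h : S ⊆ Dom) : step Dom S ⊆ Dom :=
  Finset.union_subset h (Finset.filter_subset _ _)

lemma per_step (Dom S : Finset (ℤ × ℤ)) : per (step Dom S) ≤ per S := by
  have : step Dom S = S ∪ (Dom.filter (fun v => 2 ≤ (nbrs v ∩ S).card) \ S) := by
    rw [step, Finset.union_sdiff_self_eq_union]
  rw [this]
  refine per_union S _ Finset.disjoint_sdiff fun t ht => ?_
  exact (Finset.mem_filter.mp (Finset.mem_sdiff.mp ht).1).2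

lemma exists_good (Dom X : Finset (ℤ × ℤ)) (hX : X ⊆ Dom) :
    ∃ C : Finset (ℤ × ℤ), C ⊆ Dom ∧ step Dom C = C ∧ per C ≤ per X ∧ X ⊆ C := by
  have hsub : ∀ n, (step Dom)^[n] X ⊆ Dom := by
    intro n; induction n with
    | zero => exact hX
    | succ n ih => rw [Function.iterate_succ_apply']; exact step_subset ih
  have hmono : ∀ n, X ⊆ (step Dom)^[n] X := by
    intro n; induction n with
    | zero => exact subset_rfl
    | succ n ih =>
        rw [Function.iterate_succ_apply']
        exact ih.trans (subset_step _ _)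
  have hper : ∀ n, per ((step Dom)^[n] X) ≤ per X := by
    intro n; induction n with
    | zero => exact Nat.le_refl _
    | succ n ih =>
        rw [Function.iterate_succ_apply']
        exact (per_step _ _).trans ih
  suffices h : ∃ n, step Dom ((step Dom)^[n] X) = (step Dom)^[n] X by
    obtain ⟨n, hn⟩ := h
    exact ⟨(step Dom)^[n] X, hsub n, hn, hper n, hmono n⟩
  by_contra h
  push_neg at h
  have hcard : ∀ n, n ≤ ((step Dom)^[n] X).card := by
    intro n; induction n with
    | zero => exact Nat.zero_le _
    | succ n ih =>
        rw [Function.iterate_succ_apply']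
        have hss : (step Dom)^[n] X ⊂ step Dom ((step Dom)^[n] X) :=
          Finset.ssubset_iff_subset_ne.mpr ⟨subset_step _ _, fun he => h n he.symm⟩
        have := Finset.card_lt_card hss
        omega
  have h1 := hcard (Dom.card + 1)
  have h2 := Finset.card_le_card (hsub (Dom.card + 1))
  omega

lemma per_le (S : Finset (ℤ × ℤ)) : per S ≤ 4 * S.card := by
  rw [per]
  calc ∑ v ∈ S, (nbrs v \ S).card ≤ ∑ _v ∈ S, 4 :=
        Finset.sum_le_sum fun v _ => by
          have := Finset.card_le_card (Finset.sdiff_subset (s := nbrs v) (t := S))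
          rw [card_nbrs] at this; exact this
    _ = 4 * S.card := by rw [Finset.sum_const, smul_eq_mul, mul_comm]

lemma per_Dom (a b c d : ℤ) (hab : a ≤ b) (hcd : c ≤ d) :
    per (Finset.Icc a b ×ˢ Finset.Icc c d) =
      2 * ((Finset.Icc a b).card + (Finset.Icc c d).card) := by
  have key : ∀ x ∈ Finset.Icc a b, ∀ y ∈ Finset.Icc c d,
      (nbrs (x, y) \ (Finset.Icc a b ×ˢ Finset.Icc c d)).card
        = ((if x = a then 1 else 0) + (if x = b then 1 else 0)
           + (if y = c then 1 else 0) + (if y = d then 1 else 0)) := by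
    intro x hx y hy
    rw [card_sdiff_sum, sum_nbrs]
    simp only [Finset.mem_Icc] at hx hy
    simp only [Finset.mem_product, Finset.mem_Icc, Prod.fst, Prod.snd]
    split_ifs <;> omega
  rw [per, Finset.sum_product,
    Finset.sum_congr rfl (fun x hx => Finset.sum_congr rfl (fun y hy => key x hx y hy))]
  have hsum1 : ∀ x : ℤ, ∑ y ∈ Finset.Icc c d,
      ((if x = a then 1 else 0) + (if x = b then 1 else 0)
        + (if y = c then 1 else 0) + (if y = d then 1 else 0))
      = (Finset.Icc c d).card * ((if x = a then 1 else 0) + (if x = b then 1 else 0)) + 2 := by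
    intro x
    rw [Finset.sum_add_distrib, Finset.sum_add_distrib, Finset.sum_add_distrib]
    rw [Finset.sum_const, Finset.sum_const, smul_eq_mul, smul_eq_mul]
    rw [Finset.sum_ite_eq' (Finset.Icc c d) c (fun _ => 1),
        Finset.sum_ite_eq' (Finset.Icc c d) d (fun _ => 1)]
    simp only [Finset.mem_Icc, le_refl, hcd, if_true, true_and, and_true]
    ring
  rw [Finset.sum_congr rfl (fun x _ => hsum1 x)]
  rw [Finset.sum_add_distrib, Finset.sum_const, smul_eq_mul, ← Finset.mul_sum]
  rw [Finset.sum_add_distrib,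
      Finset.sum_ite_eq' (Finset.Icc a b) a (fun _ => 1),
      Finset.sum_ite_eq' (Finset.Icc a b) b (fun _ => 1)]
  simp only [Finset.mem_Icc, le_refl, hab, if_true, true_and, and_true]
  ring

end BP

/-- If a rectangle `R = [a,b] × [c,d]` is internally filled by `A`, then
`|A ∩ R| ≥ φ(R)/2`, where `φ(R)` is the semi-perimeter of `R`. -/
theorem card_ge_semiperimeter_div_two (a b c d : ℤ) (hab : a ≤ b) (hcd : c ≤ d)
    (R : Set (ℤ × ℤ)) (hR : R = Set.Icc a b ×ˢ Set.Icc c d)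
    (A : Set (ℤ × ℤ)) (hfill : bClosure R A = R) :
    (((b - a + 1) + (d - c + 1) : ℤ) : ℝ) / 2 ≤ ((A ∩ R).ncard : ℝ) := by
  classical
  set Dom : Finset (ℤ × ℤ) := Finset.Icc a b ×ˢ Finset.Icc c d with hDomdef
  have hDom : (↑Dom : Set (ℤ × ℤ)) = R := by
    rw [hR, hDomdef]; push_cast [Finset.coe_product]; rfl
  set A₀ : Finset (ℤ × ℤ) := Dom.filter (fun v => v ∈ A) with hA0def
  have hAR : A ∩ R = ↑A₀ := by
    ext v
    simp only [hA0def, Finset.coe_filter, Set.mem_setOf_eq, Set.mem_inter_iff, ← hDom,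
      Finset.mem_coe]
    tauto
  obtain ⟨C, hCDom, hCfix, hCper, hA0C⟩ :=
    BP.exists_good Dom A₀ (Finset.filter_subset _ _)
  -- C equals Dom
  have hmem : (↑C : Set (ℤ × ℤ)) ∈ {B : Set (ℤ × ℤ) | A ∩ R ⊆ B ∧
      ∀ v ∈ R, (∃ w₁ ∈ B, ∃ w₂ ∈ B, w₁ ≠ w₂ ∧ adjZ2 v w₁ ∧ adjZ2 v w₂) → v ∈ B} := by
    constructor
    · rw [hAR]; exact_mod_cast hA0C
    · rintro v hv ⟨w₁, hw₁, w₂, hw₂, hne, ha1, ha2⟩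
      have h2 : 2 ≤ (BP.nbrs v ∩ C).card := by
        refine Finset.one_lt_card.mpr ⟨w₁, ?_, w₂, ?_, hne⟩
        · exact Finset.mem_inter.mpr ⟨BP.mem_nbrs.mpr ha1, hw₁⟩
        · exact Finset.mem_inter.mpr ⟨BP.mem_nbrs.mpr ha2, hw₂⟩
      have hvDom : v ∈ Dom := by rw [← hDom] at hv; exact hv
      have : v ∈ BP.step Dom C :=
        Finset.mem_union_right _ (Finset.mem_filter.mpr ⟨hvDom, h2⟩)
      rw [hCfix] at this
      exact this
  have hRC : R ⊆ ↑C := by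
    rw [← hfill]; exact Set.sInter_subset_of_mem hmem
  have hCeq : C = Dom := by
    apply Finset.coe_injective
    refine le_antisymm ?_ (hDom ▸ hRC)
    exact_mod_cast hCDom
  -- perimeter chain
  have hperDom : BP.per Dom = 2 * ((Finset.Icc a b).card + (Finset.Icc c d).card) :=
    BP.per_Dom a b c d hab hcd
  have hchain : 2 * ((Finset.Icc a b).card + (Finset.Icc c d).card) ≤ 4 * A₀.card := by
    rw [← hperDom, ← hCeq]
    exact hCper.trans (BP.per_le A₀)
  have hcard1 : ((Finset.Icc a b).card : ℤ) = b - a + 1 := by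
    rw [Int.card_Icc]; omega
  have hcard2 : ((Finset.Icc c d).card : ℤ) = d - c + 1 := by
    rw [Int.card_Icc]; omega
  have hZ : (b - a + 1) + (d - c + 1) ≤ 2 * (A₀.card : ℤ) := by
    have := hchain
    have h' : (2 * ((Finset.Icc a b).card + (Finset.Icc c d).card) : ℤ)
        ≤ (4 * A₀.card : ℤ) := by exact_mod_cast this
    rw [hcard1, hcard2] at * <;> linarith [h']
  have hncard : (A ∩ R).ncard = A₀.card := by rw [hAR, Set.ncard_coe_finset]
  rw [hncard, div_le_iff₀ (by norm_num : (0:ℝ) < 2)]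
  have : ((b - a + 1) + (d - c + 1) : ℝ) ≤ 2 * (A₀.card : ℝ) := by exact_mod_cast hZ
  push_cast
  linarith
end

section
/- Let g(z) = −log(β(1−e^{−z})), where β(u) = (u+√(u(4−3u)))/2. Then for every B > 0 there exists δ ∈ (0,1) such that g′(z) ≤ −δ/z for all z ∈ (0,B), and there exists B′ ≥ B such that g′(z) ≥ −B′/z for all z ∈ (0,B). -/
lemma betaFn_hasDerivAt (u : ℝ) (h0 : 0 < u) (h1 : u < 1) :
    HasDerivAt betaFn ((Real.sqrt (u * (4 - 3 * u)) + 2 - 3 * u) /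
      (2 * Real.sqrt (u * (4 - 3 * u)))) u := by
  have hq : 0 < u * (4 - 3 * u) := by nlinarith
  have hs : 0 < Real.sqrt (u * (4 - 3 * u)) := Real.sqrt_pos.2 hq
  have hinner : HasDerivAt (fun u : ℝ => u * (4 - 3 * u)) (4 - 6 * u) u := by
    have := (hasDerivAt_id u).mul ((hasDerivAt_const u (4:ℝ)).sub ((hasDerivAt_id u).const_mul 3))
    refine this.congr_deriv ?_
    simp [id]
    ring
  have hsq : HasDerivAt (fun u : ℝ => Real.sqrt (u * (4 - 3 * u)))
      (1 / (2 * Real.sqrt (u * (4 - 3 * u))) * (4 - 6 * u)) u :=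
    (Real.hasDerivAt_sqrt hq.ne').comp u hinner
  have h := ((hasDerivAt_id u).add hsq).div_const 2
  have heq : HasDerivAt betaFn
      ((1 + 1 / (2 * Real.sqrt (u * (4 - 3 * u))) * (4 - 6 * u)) / 2) u := h
  convert heq using 1
  set S := Real.sqrt (u * (4 - 3 * u)) with hS
  have hs' : S ≠ 0 := hs.ne'
  field_simp
  ring

lemma gFn_hasDerivAt (z : ℝ) (hz : 0 < z) :
    HasDerivAt gFn
      (-(Real.exp (-z) * (Real.sqrt ((1 - Real.exp (-z)) * (4 - 3 * (1 - Real.exp (-z)))) + 2 -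
          3 * (1 - Real.exp (-z)))) /
        (Real.sqrt ((1 - Real.exp (-z)) * (4 - 3 * (1 - Real.exp (-z)))) *
          ((1 - Real.exp (-z)) + Real.sqrt ((1 - Real.exp (-z)) * (4 - 3 * (1 - Real.exp (-z))))))) z := by
  set u : ℝ := 1 - Real.exp (-z) with hu
  have hez : Real.exp (-z) < 1 := by
    rw [Real.exp_lt_one_iff]; linarith
  have hezpos : 0 < Real.exp (-z) := Real.exp_pos _
  have h0 : 0 < u := by simp [hu]; linarith
  have h1 : u < 1 := by simp [hu]; linarith
  set s : ℝ := Real.sqrt (u * (4 - 3 * u)) with hsdef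
  have hq : 0 < u * (4 - 3 * u) := by nlinarith
  have hs : 0 < s := Real.sqrt_pos.2 hq
  have hβ : 0 < betaFn u := by
    unfold betaFn
    rw [← hsdef]
    positivity
  have hinner : HasDerivAt (fun z : ℝ => 1 - Real.exp (-z)) (Real.exp (-z)) z := by
    have h := ((hasDerivAt_id z).neg.exp)
    have h2 := (hasDerivAt_const z (1:ℝ)).sub h
    refine h2.congr_deriv ?_
    simp
  have hb := (betaFn_hasDerivAt u h0 h1).comp z hinner
  have hlog := hb.log hβ.ne'
  have := hlog.neg
  have hgfn : (fun z : ℝ => -Real.log ((betaFn ∘ fun z : ℝ => 1 - Real.exp (-z)) z)) = gFn := by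
    funext x
    simp [gFn, Function.comp]
  rw [show (-fun y => Real.log ((betaFn ∘ fun z : ℝ => 1 - Real.exp (-z)) y)) = (fun z : ℝ => -Real.log ((betaFn ∘ fun z : ℝ => 1 - Real.exp (-z)) z)) from rfl, hgfn] at this
  refine this.congr_deriv ?_
  have hβval : betaFn u = (u + s) / 2 := by unfold betaFn; rw [← hsdef]
  simp only [Function.comp_apply]
  rw [← hu, ← hsdef, hβval]
  have hus : 0 < u + s := by positivity
  have hs' : s ≠ 0 := hs.ne'
  have hus' : u + s ≠ 0 := hus.ne'
  field_simp

theorem g_deriv_two_sided_bounds :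
    ∀ B > (0:ℝ),
      (∃ δ : ℝ, 0 < δ ∧ δ < 1 ∧ ∀ z : ℝ, 0 < z → z < B → deriv gFn z ≤ -δ / z) ∧
      (∃ B' : ℝ, B ≤ B' ∧ ∀ z : ℝ, 0 < z → z < B → -B' / z ≤ deriv gFn z) := by
  intro B hB
  have key : ∀ z : ℝ, 0 < z → z < B →
      Real.exp (-2 * B) / 6 / z ≤
        (Real.exp (-z) * (Real.sqrt ((1 - Real.exp (-z)) * (4 - 3 * (1 - Real.exp (-z)))) + 2 -
          3 * (1 - Real.exp (-z)))) /
        (Real.sqrt ((1 - Real.exp (-z)) * (4 - 3 * (1 - Real.exp (-z)))) *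
          ((1 - Real.exp (-z)) + Real.sqrt ((1 - Real.exp (-z)) * (4 - 3 * (1 - Real.exp (-z)))))) ∧
      (Real.exp (-z) * (Real.sqrt ((1 - Real.exp (-z)) * (4 - 3 * (1 - Real.exp (-z)))) + 2 -
          3 * (1 - Real.exp (-z)))) /
        (Real.sqrt ((1 - Real.exp (-z)) * (4 - 3 * (1 - Real.exp (-z)))) *
          ((1 - Real.exp (-z)) + Real.sqrt ((1 - Real.exp (-z)) * (4 - 3 * (1 - Real.exp (-z)))))) ≤
        (B + 4 * Real.exp B) / z := by
    intro z hz hzB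
    set u : ℝ := 1 - Real.exp (-z) with hu
    have hez : Real.exp (-z) < 1 := by rw [Real.exp_lt_one_iff]; linarith
    have hezpos : 0 < Real.exp (-z) := Real.exp_pos _
    have h0 : 0 < u := by simp [hu]; linarith
    have h1 : u < 1 := by simp [hu]; linarith
    set s : ℝ := Real.sqrt (u * (4 - 3 * u)) with hsdef
    have hq : 0 < u * (4 - 3 * u) := by nlinarith
    have hs : 0 < s := Real.sqrt_pos.2 hq
    have hs2 : s ^ 2 = u * (4 - 3 * u) := Real.sq_sqrt hq.le
    have hsle2 : s ≤ 2 := by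
      rw [hsdef]
      have : u * (4 - 3 * u) ≤ 4 := by nlinarith
      calc Real.sqrt (u * (4 - 3 * u)) ≤ Real.sqrt 4 := Real.sqrt_le_sqrt this
        _ = 2 := by
            rw [show (4:ℝ) = 2 ^ 2 by norm_num, Real.sqrt_sq (by norm_num)]
    have hsge : 2 * u - 1 ≤ s := by
      rcases le_or_gt u (1/2) with h | h
      · linarith
      · have hsq : (2 * u - 1) ^ 2 ≤ u * (4 - 3 * u) := by nlinarith
        calc 2 * u - 1 = Real.sqrt ((2 * u - 1) ^ 2) := by
              rw [Real.sqrt_sq (by linarith)]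
          _ ≤ s := by rw [hsdef]; exact Real.sqrt_le_sqrt hsq
    -- u ≤ z and z ≤ exp z * u
    have huz : u ≤ z := by
      have := Real.add_one_le_exp (-z)
      simp [hu]; linarith
    have hzu : z ≤ Real.exp z * u := by
      have h1 := Real.add_one_le_exp z
      have : Real.exp z * u = Real.exp z - 1 := by
        rw [hu]; rw [mul_sub, mul_one, ← Real.exp_add]; simp
      rw [this]; linarith
    have hA : Real.exp (-z) * (s + 2 - 3 * u) > 0 := by nlinarith
    have hC : 0 < s * (u + s) := by positivity
    constructor
    · rw [div_le_div_iff₀ hz hC]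
      -- (exp(-2B)/6) * (s*(u+s)) ≤ exp(-z)*(s+2-3u) * z
      have hCle : s * (u + s) ≤ 6 * u := by nlinarith
      have he2 : Real.exp (-2 * B) ≤ Real.exp (-z) * Real.exp (-z) := by
        rw [← Real.exp_add]
        exact Real.exp_le_exp.2 (by linarith)
      have hA2 : Real.exp (-z) * Real.exp (-z) ≤ Real.exp (-z) * (s + 2 - 3 * u) := by
        have : Real.exp (-z) = 1 - u := by rw [hu]; ring
        nlinarith
      calc Real.exp (-2 * B) / 6 * (s * (u + s)) ≤ Real.exp (-2 * B) / 6 * (6 * u) := by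
            apply mul_le_mul_of_nonneg_left hCle (by positivity)
        _ = Real.exp (-2 * B) * u := by ring
        _ ≤ Real.exp (-z) * (s + 2 - 3 * u) * z := by
            have h1 : Real.exp (-2 * B) * u ≤ (Real.exp (-z) * Real.exp (-z)) * u := by
              apply mul_le_mul_of_nonneg_right he2 h0.le
            have h2 : (Real.exp (-z) * Real.exp (-z)) * u ≤ (Real.exp (-z) * (s + 2 - 3 * u)) * u :=
              mul_le_mul_of_nonneg_right hA2 h0.le
            have h3 : (Real.exp (-z) * (s + 2 - 3 * u)) * u ≤ (Real.exp (-z) * (s + 2 - 3 * u)) * z :=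
              mul_le_mul_of_nonneg_left huz hA.le
            linarith
    · rw [div_le_div_iff₀ hC hz]
      -- exp(-z)*(s+2-3u) * z ≤ (B + 4 exp B) * (s*(u+s))
      have hez1 : Real.exp (-z) ≤ 1 := hez.le
      have hAle : Real.exp (-z) * (s + 2 - 3 * u) ≤ 4 := by nlinarith
      have hCge : u ≤ s * (u + s) := by nlinarith
      have heB : Real.exp z ≤ Real.exp B := Real.exp_le_exp.2 hzB.le
      have hzle : z ≤ Real.exp B * (s * (u + s)) := by
        calc z ≤ Real.exp z * u := hzu
          _ ≤ Real.exp B * u := mul_le_mul_of_nonneg_right heB h0.le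
          _ ≤ Real.exp B * (s * (u + s)) := mul_le_mul_of_nonneg_left hCge (Real.exp_pos _).le
      have heBpos : 0 < Real.exp B := Real.exp_pos _
      calc Real.exp (-z) * (s + 2 - 3 * u) * z ≤ 4 * z := by
            apply mul_le_mul_of_nonneg_right hAle hz.le
        _ ≤ 4 * (Real.exp B * (s * (u + s))) := by linarith
        _ ≤ (B + 4 * Real.exp B) * (s * (u + s)) := by nlinarith
  constructor
  · refine ⟨Real.exp (-2 * B) / 6, by positivity, ?_, ?_⟩
    · have : Real.exp (-2 * B) ≤ 1 := by
        rw [Real.exp_le_one_iff]; linarith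
      linarith
    · intro z hz hzB
      rw [(gFn_hasDerivAt z hz).deriv]
      have := (key z hz hzB).1
      rw [neg_div, neg_div]
      linarith
  · refine ⟨B + 4 * Real.exp B, by nlinarith [Real.exp_pos B], ?_⟩
    intro z hz hzB
    rw [(gFn_hasDerivAt z hz).deriv]
    have := (key z hz hzB).2
    rw [neg_div, neg_div]
    linarith
end

section
/- In two-neighbour bootstrap percolation on a rectangle R ⊂ ℤ² with long(R) ≥ 2: if A is a minimal set whose closure within R equals R (i.e. [A] = R but [A′] ≠ R for every proper subset A′ ⊂ A), and A₁, A₂ are disjoint subsets of A with S₁ = [A₁], S₂ = [A₂] rectangles satisfying [S₁ ∪ S₂] = R, then A₁ ∩ S₂ = ∅ and A₂ ∩ S₁ = ∅; consequently [A ∩ (S₁ \ S₂)] = S₁ and [A ∩ (S₂ \ S₁)] = S₂. -/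
/-- A subset of `ℤ²` is a rectangle. -/
def IsRectangle (S : Set (ℤ × ℤ)) : Prop :=
  ∃ a b c d : ℤ, a ≤ b ∧ c ≤ d ∧ S = Set.Icc a b ×ˢ Set.Icc c d

lemma bClosure_le {R A B : Set (ℤ × ℤ)} (h1 : A ∩ R ⊆ B)
    (h2 : ∀ v ∈ R, (∃ w₁ ∈ B, ∃ w₂ ∈ B, w₁ ≠ w₂ ∧ adjZ2 v w₁ ∧ adjZ2 v w₂) → v ∈ B) :
    bClosure R A ⊆ B :=
  Set.sInter_subset_of_mem ⟨h1, h2⟩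

lemma bClosure_mem (R A : Set (ℤ × ℤ)) :
    A ∩ R ⊆ bClosure R A ∧
    ∀ v ∈ R, (∃ w₁ ∈ bClosure R A, ∃ w₂ ∈ bClosure R A,
      w₁ ≠ w₂ ∧ adjZ2 v w₁ ∧ adjZ2 v w₂) → v ∈ bClosure R A := by
  constructor
  · intro x hx B hB
    exact hB.1 hx
  · intro v hv ⟨w₁, hw₁, w₂, hw₂, hne, ha₁, ha₂⟩ B hB
    exact hB.2 v hv ⟨w₁, hw₁ B hB, w₂, hw₂ B hB, hne, ha₁, ha₂⟩

lemma subset_bClosure {R A : Set (ℤ × ℤ)} : A ∩ R ⊆ bClosure R A :=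
  (bClosure_mem R A).1

lemma bClosure_subset {R A : Set (ℤ × ℤ)} : bClosure R A ⊆ R :=
  bClosure_le Set.inter_subset_right (fun v hv _ => hv)

lemma bClosure_mono {R A B : Set (ℤ × ℤ)} (h : A ⊆ B) :
    bClosure R A ⊆ bClosure R B :=
  bClosure_le ((Set.inter_subset_inter_left R h).trans subset_bClosure)
    (bClosure_mem R B).2

lemma bClosure_le_of_subset_closure {R A B : Set (ℤ × ℤ)}
    (h : A ∩ R ⊆ bClosure R B) : bClosure R A ⊆ bClosure R B :=
  bClosure_le h (bClosure_mem R B).2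

/-- If `A` is a minimal percolating set for the rectangle `R` with `long(R) ≥ 2`,
and `A₁, A₂ ⊆ A` are disjoint with rectangular closures `S₁, S₂` spanning `R`,
then `A₁ ∩ S₂ = ∅`, `A₂ ∩ S₁ = ∅`, and consequently
`[A ∩ (S₁ \ S₂)] = S₁` and `[A ∩ (S₂ \ S₁)] = S₂`. -/
theorem minimal_disjoint_spanning (a b c d : ℤ) (hab : a ≤ b) (hcd : c ≤ d)
    (hlong : 2 ≤ max (b - a + 1) (d - c + 1))
    (R : Set (ℤ × ℤ)) (hR : R = Set.Icc a b ×ˢ Set.Icc c d)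
    (A : Set (ℤ × ℤ)) (hAR : A ⊆ R)
    (hperc : bClosure R A = R)
    (hmin : ∀ A' : Set (ℤ × ℤ), A' ⊂ A → bClosure R A' ≠ R)
    (A₁ A₂ : Set (ℤ × ℤ)) (h₁ : A₁ ⊆ A) (h₂ : A₂ ⊆ A) (hdisj : Disjoint A₁ A₂)
    (S₁ S₂ : Set (ℤ × ℤ)) (hS₁ : S₁ = bClosure R A₁) (hS₂ : S₂ = bClosure R A₂)
    (hrect₁ : IsRectangle S₁) (hrect₂ : IsRectangle S₂)
    (hspan : bClosure R (S₁ ∪ S₂) = R) :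
    A₁ ∩ S₂ = ∅ ∧ A₂ ∩ S₁ = ∅ ∧
      bClosure R (A ∩ (S₁ \ S₂)) = S₁ ∧ bClosure R (A ∩ (S₂ \ S₁)) = S₂ := by
  -- key lemma: removing a point of A₁ ∩ S₂ (or A₂ ∩ S₁) contradicts minimality
  have key : ∀ (B₁ B₂ : Set (ℤ × ℤ)), B₁ ⊆ A → B₂ ⊆ A → Disjoint B₁ B₂ →
      B₁ ∩ bClosure R B₂ = ∅ := by
    intro B₁ B₂ hB₁ hB₂ hd
    by_contra h
    obtain ⟨x, hxB₁, hxS⟩ := Set.nonempty_iff_ne_empty.2 h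
    have hxA : x ∈ A := hB₁ hxB₁
    have hsub : A \ {x} ⊂ A := ⟨Set.diff_subset, fun h => (h hxA).2 rfl⟩
    apply hmin _ hsub
    have hB₂' : B₂ ⊆ A \ {x} := by
      intro y hy
      exact ⟨hB₂ hy, fun hyx => hd.ne_of_mem hxB₁ hy (Set.mem_singleton_iff.mp hyx).symm⟩
    have hx' : x ∈ bClosure R (A \ {x}) := bClosure_mono hB₂' hxS
    have hA : A ∩ R ⊆ bClosure R (A \ {x}) := by
      intro y ⟨hyA, hyR⟩
      by_cases hyx : y = x
      · exact hyx ▸ hx'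
      · exact subset_bClosure ⟨⟨hyA, hyx⟩, hyR⟩
    have : bClosure R A ⊆ bClosure R (A \ {x}) := bClosure_le_of_subset_closure hA
    rw [hperc] at this
    exact le_antisymm bClosure_subset this
  have e1 : A₁ ∩ S₂ = ∅ := hS₂ ▸ key A₁ A₂ h₁ h₂ hdisj
  have e2 : A₂ ∩ S₁ = ∅ := hS₁ ▸ key A₂ A₁ h₂ h₁ hdisj.symm
  refine ⟨e1, e2, ?_, ?_⟩
  · -- A₁ ⊆ A ∩ (S₁ \ S₂)
    have hA₁sub : A₁ ⊆ A ∩ (S₁ \ S₂) := by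
      intro x hx
      have hxS₁ : x ∈ S₁ := hS₁ ▸ subset_bClosure ⟨hx, hAR (h₁ hx)⟩
      have hxS₂ : x ∉ S₂ := fun hxS₂ => by
        rw [Set.eq_empty_iff_forall_notMem] at e1; exact e1 x ⟨hx, hxS₂⟩
      exact ⟨h₁ hx, hxS₁, hxS₂⟩
    refine le_antisymm ?_ ?_
    · exact bClosure_le (fun y hy => hy.1.2.1)
        (fun v hv h => hS₁ ▸ (bClosure_mem R A₁).2 v hv (hS₁ ▸ h))
    · conv_lhs => rw [hS₁]
      exact bClosure_mono hA₁sub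
  · have hA₂sub : A₂ ⊆ A ∩ (S₂ \ S₁) := by
      intro x hx
      have hxS₂ : x ∈ S₂ := hS₂ ▸ subset_bClosure ⟨hx, hAR (h₂ hx)⟩
      have hxS₁ : x ∉ S₁ := fun hxS₁ => by
        rw [Set.eq_empty_iff_forall_notMem] at e2; exact e2 x ⟨hx, hxS₁⟩
      exact ⟨h₂ hx, hxS₂, hxS₁⟩
    refine le_antisymm ?_ ?_
    · exact bClosure_le (fun y hy => hy.1.2.1)
        (fun v hv h => hS₂ ▸ (bClosure_mem R A₂).2 v hv (hS₂ ▸ h))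
    · conv_lhs => rw [hS₂]
      exact bClosure_mono hA₂sub
end

section
/- Let E and F be events in a finite product probability space {0,1}^V with product measure ℙ_p, where E is the intersection of an increasing event with the (decreasing) event that a fixed set X ⊆ V is empty, and similarly F. Then ℙ_p(E ∘ F) ≤ ℙ_p(E)·ℙ_p(F), where E ∘ F denotes disjoint occurrence: there exist disjoint sets of coordinates witnessing E and F respectively. -/
open scoped Classical in
/-- The probability of the event `E` under the `p`-random (product Bernoulli)
measure on subsets of the finite set `V`. -/
noncomputable def probEvent {ι : Type*} [DecidableEq ι] (V : Finset ι) (p : ℝ)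
    (E : Finset ι → Prop) : ℝ :=
  ∑ A ∈ V.powerset, if E A then p ^ A.card * (1 - p) ^ (V.card - A.card) else 0

/-- An event (a property of subsets) is increasing. -/
def IncreasingEvent {ι : Type*} (E : Finset ι → Prop) : Prop :=
  ∀ S T : Finset ι, S ⊆ T → E S → E T

/-- The events `E` and `F` occur disjointly for `A`: there are disjoint sets of
coordinates `X` and `Y` such that any configuration agreeing with `A` on `X`
lies in `E` and any configuration agreeing with `A` on `Y` lies in `F`. -/
def DisjOcc {ι : Type*} [DecidableEq ι] (E F : Finset ι → Prop) (A : Finset ι) : Prop :=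
  ∃ X Y : Finset ι, Disjoint X Y ∧
    (∀ S : Finset ι, S ∩ X = A ∩ X → E S) ∧
    (∀ T : Finset ι, T ∩ Y = A ∩ Y → F T)


/-!
A witness of `E⁺ ∩ {A ∩ X₀ = ∅}` on coordinates `X` must contain `X₀`. So disjoint occurrence
forces `X₀ ∩ Y₀ = ∅`, forces `A` to avoid `X₀ ∪ Y₀`, and makes `E⁺` and `F⁺` occur disjointly.
Factoring out the closed coordinates, the claim reduces to the BK inequality for increasing
events on `V \ (X₀ ∪ Y₀)`, combined with the monotonicity of `ℙ(E⁺)` in the ground set.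

The BK inequality for increasing events is proved by coupling two independent configurations
`A` and `B`. Consider the event that `E⁺` has a witness in `A` and `F⁺` has a disjoint witness
in the configuration that equals `B` on `K` and `A` off `K`. Its probability does not decrease
when one coordinate `k` is added to `K`, because the two witnesses cannot both use `k`. At
`K = ∅` this event is `E⁺ ∘ F⁺`, and at `K = V` it implies `E⁺(A) ∧ F⁺(B)`.
-/

open Finset
open scoped Classical

section BernoulliExpect

variable {ι : Type*}

noncomputable def bernoulliExpect (V : Finset ι) (p : ℝ) (f : Finset ι → ℝ) : ℝ :=
  ∑ A ∈ V.powerset, p ^ #A * (1 - p) ^ (#V - #A) * f A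

variable {V : Finset ι} {p : ℝ}

lemma bernoulliExpect_mono (hp0 : 0 ≤ p) (hp1 : p ≤ 1) {f g : Finset ι → ℝ}
    (h : ∀ A ⊆ V, f A ≤ g A) : bernoulliExpect V p f ≤ bernoulliExpect V p g :=
  sum_le_sum fun A hA => mul_le_mul_of_nonneg_left (h A (mem_powerset.mp hA))
    (mul_nonneg (pow_nonneg hp0 _) (pow_nonneg (sub_nonneg.mpr hp1) _))

lemma bernoulliExpect_congr {f g : Finset ι → ℝ} (h : ∀ A ⊆ V, f A = g A) :
    bernoulliExpect V p f = bernoulliExpect V p g :=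
  sum_congr rfl fun A hA => by rw [h A (mem_powerset.mp hA)]

lemma bernoulliExpect_add (a b : ℝ) (f g : Finset ι → ℝ) :
    bernoulliExpect V p (fun A => a * f A + b * g A) =
      a * bernoulliExpect V p f + b * bernoulliExpect V p g := by
  simp only [bernoulliExpect, mul_sum, ← sum_add_distrib]
  exact sum_congr rfl fun _ _ => by ring

lemma bernoulliExpect_mul_const (f : Finset ι → ℝ) (c : ℝ) :
    bernoulliExpect V p (fun A => f A * c) = bernoulliExpect V p f * c := by
  simp only [bernoulliExpect, sum_mul, mul_assoc]

lemma bernoulliExpect_const_mul (c : ℝ) (f : Finset ι → ℝ) :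
    bernoulliExpect V p (fun A => c * f A) = c * bernoulliExpect V p f := by
  simpa using bernoulliExpect_add (V := V) (p := p) c 0 f f

@[simp]
lemma bernoulliExpect_empty (f : Finset ι → ℝ) : bernoulliExpect ∅ p f = f ∅ := by
  simp [bernoulliExpect]

lemma bernoulliExpect_eq_of_eq_zero {f : Finset ι → ℝ} (h : ∀ A ⊆ V, A ≠ ∅ → f A = 0) :
    bernoulliExpect V p f = (1 - p) ^ #V * f ∅ := by
  rw [bernoulliExpect, sum_eq_single ∅ (fun A hA hA0 => by rw [h A (mem_powerset.mp hA) hA0,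
    mul_zero]) (fun h => absurd (empty_mem_powerset V) h)]
  simp

variable [DecidableEq ι]

lemma bernoulliExpect_insert {S : Finset ι} {k : ι} (hk : k ∉ S) (f : Finset ι → ℝ) :
    bernoulliExpect (insert k S) p f =
      (1 - p) * bernoulliExpect S p f + p * bernoulliExpect S p (fun A => f (insert k A)) := by
  simp only [bernoulliExpect, sum_powerset_insert hk, mul_sum]
  congr 1 <;> refine sum_congr rfl fun A hA => ?_
  · rw [card_insert_of_notMem hk, Nat.sub_add_comm (card_le_card (mem_powerset.mp hA)), pow_succ]
    ring
  · rw [card_insert_of_notMem hk, card_insert_of_notMem fun h => hk (mem_powerset.mp hA h),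
      Nat.add_sub_add_right, pow_succ]
    ring

lemma bernoulliExpect_const (V : Finset ι) (p c : ℝ) : bernoulliExpect V p (fun _ => c) = c := by
  induction V using Finset.induction_on with
  | empty => simp
  | insert k S hk ih => rw [bernoulliExpect_insert hk, ih]; ring

lemma bernoulliExpect_union {S T : Finset ι} (hST : Disjoint S T) (f : Finset ι → ℝ) :
    bernoulliExpect (S ∪ T) p f =
      bernoulliExpect S p (fun A => bernoulliExpect T p (fun B => f (A ∪ B))) := by
  induction T using Finset.induction_on generalizing f with
  | empty => simp
  | insert k T hk ih =>
    rw [disjoint_insert_right] at hST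
    rw [union_insert, bernoulliExpect_insert (by simp [hk, hST.1]), ih hST.2, ih hST.2]
    simp only [bernoulliExpect_insert hk, bernoulliExpect_add, union_insert]

end BernoulliExpect

section ProbEvent

variable {ι : Type*} [DecidableEq ι] {V : Finset ι} {p : ℝ}

lemma ite_one_zero_le_of_imp {P Q : Prop} (h : P → Q) :
    (if P then 1 else 0 : ℝ) ≤ if Q then 1 else 0 := by
  split_ifs <;> simp_all

lemma probEvent_eq_bernoulliExpect (V : Finset ι) (p : ℝ) (E : Finset ι → Prop) :
    probEvent V p E = bernoulliExpect V p (fun A => if E A then 1 else 0) := by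
  simp only [probEvent, bernoulliExpect, mul_ite, mul_one, mul_zero]

lemma probEvent_nonneg (hp0 : 0 ≤ p) (hp1 : p ≤ 1) (E : Finset ι → Prop) :
    0 ≤ probEvent V p E := by
  rw [probEvent_eq_bernoulliExpect]
  exact (bernoulliExpect_const V p 0).symm.trans_le
    (bernoulliExpect_mono hp0 hp1 fun A _ => by split_ifs <;> norm_num)

lemma probEvent_mono (hp0 : 0 ≤ p) (hp1 : p ≤ 1) {E F : Finset ι → Prop}
    (h : ∀ A ⊆ V, E A → F A) : probEvent V p E ≤ probEvent V p F := by
  simp only [probEvent_eq_bernoulliExpect]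
  exact bernoulliExpect_mono hp0 hp1 fun A hA => ite_one_zero_le_of_imp (h A hA)

lemma probEvent_false (V : Finset ι) (p : ℝ) : probEvent V p (fun _ => False) = 0 := by
  simp [probEvent]

lemma probEvent_and_inter_eq_empty {D : Finset ι} (hD : D ⊆ V) (E : Finset ι → Prop) :
    probEvent V p (fun A => E A ∧ A ∩ D = ∅) = (1 - p) ^ #D * probEvent (V \ D) p E := by
  conv_lhs => rw [← sdiff_union_of_subset hD]
  rw [probEvent_eq_bernoulliExpect, bernoulliExpect_union disjoint_sdiff_self_left,
    probEvent_eq_bernoulliExpect, ← bernoulliExpect_const_mul]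
  refine bernoulliExpect_congr fun A hA => ?_
  have hAD : A ∩ D = ∅ :=
    disjoint_iff_inter_eq_empty.mp (disjoint_of_subset_left hA disjoint_sdiff_self_left)
  rw [bernoulliExpect_eq_of_eq_zero fun B hB hB0 => ?_]
  · simp [hAD]
  · have hB' : B ⊆ (A ∪ B) ∩ D := subset_inter subset_union_right hB
    rw [if_neg]
    rintro ⟨-, h⟩
    exact hB0 (subset_empty.mp (h ▸ hB'))

lemma probEvent_le_of_subset (hp0 : 0 ≤ p) (hp1 : p ≤ 1) {E : Finset ι → Prop}
    (hE : IncreasingEvent E) {S T : Finset ι} (hST : S ⊆ T) :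
    probEvent S p E ≤ probEvent T p E := by
  rw [probEvent_eq_bernoulliExpect, probEvent_eq_bernoulliExpect, ← union_sdiff_of_subset hST,
    bernoulliExpect_union disjoint_sdiff]
  refine bernoulliExpect_mono hp0 hp1 fun A _ => ?_
  conv_lhs => rw [← bernoulliExpect_const (T \ S) p (if E A then 1 else 0)]
  exact bernoulliExpect_mono hp0 hp1 fun B _ => ite_one_zero_le_of_imp (hE A _ subset_union_left)

end ProbEvent

section DisjointWitnesses

variable {ι : Type*} {E F : Finset ι → Prop}

def HasDisjWitnesses (E F : Finset ι → Prop) (A B : Finset ι) : Prop :=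
  ∃ X Y, Disjoint X Y ∧ X ⊆ A ∧ E X ∧ Y ⊆ B ∧ F Y

lemma HasDisjWitnesses.mono {A A' B B' : Finset ι} (hA : A ⊆ A') (hB : B ⊆ B')
    (h : HasDisjWitnesses E F A B) : HasDisjWitnesses E F A' B' :=
  let ⟨X, Y, hXY, hXA, hX, hYB, hY⟩ := h
  ⟨X, Y, hXY, hXA.trans hA, hX, hYB.trans hB, hY⟩

lemma HasDisjWitnesses.and (hE : IncreasingEvent E) (hF : IncreasingEvent F) {A B : Finset ι}
    (h : HasDisjWitnesses E F A B) : E A ∧ F B :=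
  let ⟨X, Y, _, hXA, hX, hYB, hY⟩ := h
  ⟨hE X A hXA hX, hF Y B hYB hY⟩

variable [DecidableEq ι]

lemma HasDisjWitnesses.insert_cases {A B : Finset ι} {k : ι}
    (h : HasDisjWitnesses E F (insert k A) (insert k B)) :
    HasDisjWitnesses E F (insert k A) B ∨ HasDisjWitnesses E F A (insert k B) := by
  obtain ⟨X, Y, hXY, hXA, hX, hYB, hY⟩ := h
  by_cases hkY : k ∈ Y
  · have hkX : k ∉ X := disjoint_right.mp hXY hkY
    exact .inr ⟨X, Y, hXY, (subset_insert_iff_of_notMem hkX).mp hXA, hX, hYB, hY⟩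
  · exact .inl ⟨X, Y, hXY, hXA, hX, (subset_insert_iff_of_notMem hkY).mp hYB, hY⟩

def splice (K A B : Finset ι) : Finset ι := A \ K ∪ B ∩ K

lemma splice_insert_left_of_notMem {K A B : Finset ι} {k : ι} (hk : k ∉ K) :
    splice K (insert k A) B = insert k (splice K A B) := by
  ext x; by_cases hx : x = k <;> simp [splice, hx, hk]

lemma splice_insert_right_of_notMem {K A B : Finset ι} {k : ι} (hk : k ∉ K) :
    splice K A (insert k B) = splice K A B := by
  ext x; by_cases hx : x = k <;> simp [splice, hx, hk]

lemma splice_insert_left_of_mem {K A B : Finset ι} {k : ι} (hk : k ∈ K) :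
    splice K (insert k A) B = splice K A B := by
  ext x; by_cases hx : x = k <;> simp [splice, hx, hk]

lemma splice_insert_right_of_mem {K A B : Finset ι} {k : ι} (hk : k ∈ K) :
    splice K A (insert k B) = insert k (splice K A B) := by
  ext x; by_cases hx : x = k <;> simp [splice, hx, hk]

lemma splice_insert_of_notMem {K A B : Finset ι} {k : ι} (hA : k ∉ A) (hB : k ∉ B) :
    splice (insert k K) A B = splice K A B := by
  ext x; by_cases hx : x = k <;> simp [splice, hx, hA, hB]

@[simp]
lemma splice_empty (A B : Finset ι) : splice ∅ A B = A := by
  simp [splice]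

lemma splice_self_of_subset {K A B : Finset ι} (hA : A ⊆ K) (hB : B ⊆ K) :
    splice K A B = B := by
  simp [splice, sdiff_eq_empty_iff_subset.mpr hA, inter_eq_left.mpr hB]

end DisjointWitnesses

section BK

variable {ι : Type*} [DecidableEq ι] {V : Finset ι} {p : ℝ}

noncomputable def probPair (V : Finset ι) (p : ℝ) (G : Finset ι → Finset ι → Prop) : ℝ :=
  bernoulliExpect V p fun A => probEvent V p (G A)

lemma probPair_mono (hp0 : 0 ≤ p) (hp1 : p ≤ 1) {G H : Finset ι → Finset ι → Prop}
    (h : ∀ A ⊆ V, ∀ B ⊆ V, G A B → H A B) : probPair V p G ≤ probPair V p H :=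
  bernoulliExpect_mono hp0 hp1 fun A hA => probEvent_mono hp0 hp1 (h A hA)

lemma probPair_of_left (V : Finset ι) (p : ℝ) (E : Finset ι → Prop) :
    probPair V p (fun A _ => E A) = probEvent V p E := by
  rw [probEvent_eq_bernoulliExpect, probPair]
  refine bernoulliExpect_congr fun A _ => ?_
  rw [probEvent_eq_bernoulliExpect, bernoulliExpect_const]

lemma probPair_and (V : Finset ι) (p : ℝ) (E F : Finset ι → Prop) :
    probPair V p (fun A B => E A ∧ F B) = probEvent V p E * probEvent V p F := by
  rw [probEvent_eq_bernoulliExpect V p E, ← bernoulliExpect_mul_const, probPair]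
  refine bernoulliExpect_congr fun A _ => ?_
  by_cases hE : E A <;> simp [hE, probEvent_false]

lemma probPair_insert {S : Finset ι} {k : ι} (hk : k ∉ S) (G : Finset ι → Finset ι → Prop) :
    probPair (insert k S) p G = bernoulliExpect S p fun A => bernoulliExpect S p fun B =>
      (1 - p) * ((1 - p) * (if G A B then 1 else 0) + p * (if G A (insert k B) then 1 else 0)) +
        p * ((1 - p) * (if G (insert k A) B then 1 else 0) +
          p * (if G (insert k A) (insert k B) then 1 else 0)) := by
  simp only [probPair, probEvent_eq_bernoulliExpect, bernoulliExpect_insert hk,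
    bernoulliExpect_add]

-- Averages over the `k`-th bits of `A` and `B`; the event on the left ignores the bit of `B`.
lemma two_bernoulli_average_le (hp0 : 0 ≤ p) (hp1 : p ≤ 1) {l₀ l₁ r₀₀ r₀₁ r₁₀ r₁₁ : Prop}
    (h₀ : l₀ → r₀₀ ∧ r₀₁ ∧ r₁₀ ∧ r₁₁) (h₁ : l₁ → r₁₁ ∧ (r₁₀ ∨ r₀₁)) :
    (1 - p) * ((1 - p) * (if l₀ then 1 else 0) + p * (if l₀ then 1 else 0)) +
        p * ((1 - p) * (if l₁ then 1 else 0) + p * (if l₁ then 1 else 0)) ≤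
      (1 - p) * ((1 - p) * (if r₀₀ then 1 else 0) + p * (if r₀₁ then 1 else 0)) +
        p * ((1 - p) * (if r₁₀ then 1 else 0) + p * (if r₁₁ then 1 else 0)) := by
  have hpq : 0 ≤ p * (1 - p) := mul_nonneg hp0 (sub_nonneg.mpr hp1)
  split_ifs <;> simp_all <;> nlinarith

lemma probPair_splice_le_insert (hp0 : 0 ≤ p) (hp1 : p ≤ 1) (E F : Finset ι → Prop)
    {K : Finset ι} {k : ι} (hkV : k ∈ V) (hkK : k ∉ K) :
    probPair V p (fun A B => HasDisjWitnesses E F A (splice K A B)) ≤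
      probPair V p (fun A B => HasDisjWitnesses E F A (splice (insert k K) A B)) := by
  have hk : k ∉ V.erase k := notMem_erase k V
  rw [← insert_erase hkV, probPair_insert hk, probPair_insert hk]
  refine bernoulliExpect_mono hp0 hp1 fun A hA => bernoulliExpect_mono hp0 hp1 fun B hB => ?_
  have hkK' : k ∈ insert k K := mem_insert_self k K
  simp only [splice_insert_left_of_notMem hkK, splice_insert_right_of_notMem hkK,
    splice_insert_left_of_mem hkK', splice_insert_right_of_mem hkK',
    splice_insert_of_notMem (fun h => hk (hA h)) (fun h => hk (hB h))]
  refine two_bernoulli_average_le hp0 hp1 (fun h => ⟨h, ?_, ?_, ?_⟩) fun h => ⟨h, h.insert_cases⟩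
  · exact h.mono subset_rfl (subset_insert k _)
  · exact h.mono (subset_insert k A) subset_rfl
  · exact h.mono (subset_insert k A) (subset_insert k _)

lemma probPair_splice_empty_le (hp0 : 0 ≤ p) (hp1 : p ≤ 1) (E F : Finset ι → Prop)
    {K : Finset ι} (hK : K ⊆ V) :
    probPair V p (fun A B => HasDisjWitnesses E F A (splice ∅ A B)) ≤
      probPair V p (fun A B => HasDisjWitnesses E F A (splice K A B)) := by
  induction K using Finset.induction_on with
  | empty => rfl
  | insert k K hkK ih =>
    rw [insert_subset_iff] at hK
    exact (ih hK.2).trans (probPair_splice_le_insert hp0 hp1 E F hK.1 hkK)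

theorem probEvent_hasDisjWitnesses_le_mul (hp0 : 0 ≤ p) (hp1 : p ≤ 1) {E F : Finset ι → Prop}
    (hE : IncreasingEvent E) (hF : IncreasingEvent F) :
    probEvent V p (fun A => HasDisjWitnesses E F A A) ≤ probEvent V p E * probEvent V p F :=
  calc probEvent V p (fun A => HasDisjWitnesses E F A A)
      = probPair V p (fun A B => HasDisjWitnesses E F A (splice ∅ A B)) := by
        simp only [splice_empty, probPair_of_left]
    _ ≤ probPair V p (fun A B => HasDisjWitnesses E F A (splice V A B)) :=
        probPair_splice_empty_le hp0 hp1 E F subset_rfl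
    _ ≤ probPair V p (fun A B => E A ∧ F B) := probPair_mono hp0 hp1 fun A hA B hB h =>
        (splice_self_of_subset hA hB ▸ h).and hE hF
    _ = probEvent V p E * probEvent V p F := probPair_and V p E F

end BK

section Mixed

variable {ι : Type*} [DecidableEq ι]

lemma subset_and_witness_of_forall_agree {E : Finset ι → Prop} {X₀ X A : Finset ι}
    (h : ∀ S, S ∩ X = A ∩ X → E S ∧ S ∩ X₀ = ∅) : X₀ ⊆ X ∧ A ∩ X₀ = ∅ ∧ E (A ∩ X) := by
  -- `A ∩ X ∪ X₀ \ X` agrees with `A` on `X`, hence avoids `X₀`.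
  have hS : (A ∩ X ∪ X₀ \ X) ∩ X = A ∩ X := by
    rw [union_inter_distrib_right, sdiff_inter_self, union_empty, inter_assoc, inter_self]
  have hX₀ : X₀ \ X ⊆ (A ∩ X ∪ X₀ \ X) ∩ X₀ :=
    subset_inter subset_union_right sdiff_subset
  rw [(h _ hS).2, subset_empty, sdiff_eq_empty_iff_subset] at hX₀
  exact ⟨hX₀, (h A rfl).2, (h (A ∩ X) (by rw [inter_assoc, inter_self])).1⟩

lemma DisjOcc.of_inter_eq_empty {E F : Finset ι → Prop} {X₀ Y₀ A : Finset ι}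
    (h : DisjOcc (fun A => E A ∧ A ∩ X₀ = ∅) (fun A => F A ∧ A ∩ Y₀ = ∅) A) :
    Disjoint X₀ Y₀ ∧ HasDisjWitnesses E F A A ∧ A ∩ (X₀ ∪ Y₀) = ∅ := by
  obtain ⟨X, Y, hXY, hEX, hFY⟩ := h
  obtain ⟨hX₀, hAX₀, hE⟩ := subset_and_witness_of_forall_agree hEX
  obtain ⟨hY₀, hAY₀, hF⟩ := subset_and_witness_of_forall_agree hFY
  refine ⟨hXY.mono hX₀ hY₀, ⟨A ∩ X, A ∩ Y, hXY.mono inter_subset_right inter_subset_right,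
    inter_subset_left, hE, inter_subset_left, hF⟩, ?_⟩
  rw [inter_union_distrib_left, hAX₀, hAY₀, union_empty]

variable {V : Finset ι} {p : ℝ}

lemma probEvent_hasDisjWitnesses_and_inter_eq_empty_le (hp0 : 0 ≤ p) (hp1 : p ≤ 1)
    {E F : Finset ι → Prop} (hE : IncreasingEvent E) (hF : IncreasingEvent F)
    {X₀ Y₀ : Finset ι} (hXY : Disjoint X₀ Y₀) (hX₀ : X₀ ⊆ V) (hY₀ : Y₀ ⊆ V) :
    probEvent V p (fun A => HasDisjWitnesses E F A A ∧ A ∩ (X₀ ∪ Y₀) = ∅) ≤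
      probEvent V p (fun A => E A ∧ A ∩ X₀ = ∅) * probEvent V p (fun A => F A ∧ A ∩ Y₀ = ∅) := by
  set W := V \ (X₀ ∪ Y₀)
  calc _ = (1 - p) ^ #X₀ * (1 - p) ^ #Y₀ * probEvent W p (fun A => HasDisjWitnesses E F A A) := by
        rw [probEvent_and_inter_eq_empty (union_subset hX₀ hY₀), card_union_of_disjoint hXY,
          pow_add]
    _ ≤ (1 - p) ^ #X₀ * (1 - p) ^ #Y₀ * (probEvent W p E * probEvent W p F) := by
        gcongr; exact probEvent_hasDisjWitnesses_le_mul hp0 hp1 hE hF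
    _ ≤ (1 - p) ^ #X₀ * (1 - p) ^ #Y₀ * (probEvent (V \ X₀) p E * probEvent (V \ Y₀) p F) := by
        gcongr
        · exact probEvent_nonneg hp0 hp1 _
        · exact probEvent_nonneg hp0 hp1 _
        · exact probEvent_le_of_subset hp0 hp1 hE (sdiff_subset_sdiff subset_rfl subset_union_left)
        · exact probEvent_le_of_subset hp0 hp1 hF (sdiff_subset_sdiff subset_rfl subset_union_right)
    _ = _ := by rw [probEvent_and_inter_eq_empty hX₀, probEvent_and_inter_eq_empty hY₀]; ring

end Mixed

/-- The van den Berg–Kesten / van den Berg–Fiebig inequality for events that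
are intersections of an increasing event with a primitive decreasing event. -/
theorem vdBK_for_mixed_events {ι : Type*} [DecidableEq ι] (V : Finset ι)
    (p : ℝ) (hp0 : 0 ≤ p) (hp1 : p ≤ 1)
    (Eplus Fplus : Finset ι → Prop)
    (hE : IncreasingEvent Eplus) (hF : IncreasingEvent Fplus)
    (X₀ Y₀ : Finset ι) (hX₀ : X₀ ⊆ V) (hY₀ : Y₀ ⊆ V) :
    probEvent V p (DisjOcc (fun A => Eplus A ∧ A ∩ X₀ = ∅)
        (fun A => Fplus A ∧ A ∩ Y₀ = ∅)) ≤
      probEvent V p (fun A => Eplus A ∧ A ∩ X₀ = ∅) *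
        probEvent V p (fun A => Fplus A ∧ A ∩ Y₀ = ∅) := by
  by_cases hXY : Disjoint X₀ Y₀
  · exact (probEvent_mono hp0 hp1 fun A _ h => h.of_inter_eq_empty.2).trans
      (probEvent_hasDisjWitnesses_and_inter_eq_empty_le hp0 hp1 hE hF hXY hX₀ hY₀)
  · calc _ ≤ probEvent V p (fun _ => False) :=
          probEvent_mono hp0 hp1 fun A _ h => hXY h.of_inter_eq_empty.1
      _ = 0 := probEvent_false V p
      _ ≤ _ := mul_nonneg (probEvent_nonneg hp0 hp1 _) (probEvent_nonneg hp0 hp1 _)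
end
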